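/- Let U : ℂ → ℂ be smooth, let ψ₁, ψ₂ : ℂ → ℂ satisfy the Dirac equation with potential U and let φ₁, φ₂ : ℂ → ℂ satisfy the conjugate Dirac equation with potential U. Then the M₂(ℂ)-valued 1-form M dz + N dz̄ is closed, i.e. M_z̄ = N_z holds entrywise at every point; explicitly: ∂_z̄(ψ₁φ̄₂) = ∂_z(ψ₂φ̄₁), ∂_z̄(ψ̄₂φ̄₂) = −∂_z(ψ̄₁φ̄₁), ∂_z̄(ψ₁φ₁) = −∂_z(ψ₂φ₂), and ∂_z̄(ψ̄₂φ₁) = ∂_z(ψ̄₁φ₂). -/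

import Mathlib

open Complex ComplexConjugate Matrix

noncomputable section

/-- Wirtinger derivative ∂_z for a function on ℂ. -/
def dz (g : ℂ → ℂ) (z : ℂ) : ℂ :=
  (2 : ℂ)⁻¹ * (fderiv ℝ g z 1 - Complex.I * fderiv ℝ g z Complex.I)

/-- Wirtinger derivative ∂_z̄ for a function on ℂ. -/
def dzb (g : ℂ → ℂ) (z : ℂ) : ℂ :=
  (2 : ℂ)⁻¹ * (fderiv ℝ g z 1 + Complex.I * fderiv ℝ g z Complex.I)

/-- (ψ₁,ψ₂) satisfies the Dirac equation with potential U. -/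
def Dirac (U ψ₁ ψ₂ : ℂ → ℂ) : Prop :=
  ∀ z, dz ψ₂ z = -(U z) * ψ₁ z ∧ dzb ψ₁ z = conj (U z) * ψ₂ z

/-- (φ₁,φ₂) satisfies the conjugate Dirac equation with potential U. -/
def DiracV (U φ₁ φ₂ : ℂ → ℂ) : Prop :=
  ∀ z, dz φ₂ z = -(conj (U z)) * φ₁ z ∧ dzb φ₁ z = U z * φ₂ z

lemma fderiv_conj_apply (f : ℂ → ℂ) (z v : ℂ) (hf : DifferentiableAt ℝ f z) :
    fderiv ℝ (fun w => conj (f w)) z v = conj (fderiv ℝ f z v) := by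
  have h : fderiv ℝ (fun w => conj (f w)) z
      = (Complex.conjCLE : ℂ →L[ℝ] ℂ).comp (fderiv ℝ f z) :=
    (Complex.conjCLE.hasFDerivAt.comp z hf.hasFDerivAt).fderiv
  rw [h]; rfl

lemma dz_conj (f : ℂ → ℂ) (z : ℂ) (hf : DifferentiableAt ℝ f z) :
    dz (fun w => conj (f w)) z = conj (dzb f z) := by
  simp only [dz, dzb, fderiv_conj_apply f z _ hf, _root_.map_mul, map_add, map_sub,
    map_inv₀, Complex.conj_I, Complex.conj_ofNat]
  ring

lemma dzb_conj (f : ℂ → ℂ) (z : ℂ) (hf : DifferentiableAt ℝ f z) :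
    dzb (fun w => conj (f w)) z = conj (dz f z) := by
  simp only [dz, dzb, fderiv_conj_apply f z _ hf, _root_.map_mul, map_add, map_sub,
    map_inv₀, Complex.conj_I, Complex.conj_ofNat]
  ring

lemma dz_mul (f g : ℂ → ℂ) (z : ℂ) (hf : DifferentiableAt ℝ f z)
    (hg : DifferentiableAt ℝ g z) :
    dz (fun w => f w * g w) z = dz f z * g z + f z * dz g z := by
  simp only [dz, fderiv_fun_mul hf hg, ContinuousLinearMap.add_apply,
    ContinuousLinearMap.smul_apply, smul_eq_mul]
  ring

lemma dzb_mul (f g : ℂ → ℂ) (z : ℂ) (hf : DifferentiableAt ℝ f z)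
    (hg : DifferentiableAt ℝ g z) :
    dzb (fun w => f w * g w) z = dzb f z * g z + f z * dzb g z := by
  simp only [dzb, fderiv_fun_mul hf hg, ContinuousLinearMap.add_apply,
    ContinuousLinearMap.smul_apply, smul_eq_mul]
  ring

/-- The 1-form M dz + N dz̄ is closed: M_z̄ = N_z entrywise. -/
theorem dirac_one_form_closed
    (U ψ₁ ψ₂ φ₁ φ₂ : ℂ → ℂ)
    (hU : ContDiff ℝ (⊤ : ℕ∞) U)
    (hψ₁ : ContDiff ℝ (⊤ : ℕ∞) ψ₁) (hψ₂ : ContDiff ℝ (⊤ : ℕ∞) ψ₂)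
    (hφ₁ : ContDiff ℝ (⊤ : ℕ∞) φ₁) (hφ₂ : ContDiff ℝ (⊤ : ℕ∞) φ₂)
    (hDirac : Dirac U ψ₁ ψ₂) (hDiracV : DiracV U φ₁ φ₂) :
    ∀ z : ℂ,
      dzb (fun w => ψ₁ w * conj (φ₂ w)) z = dz (fun w => ψ₂ w * conj (φ₁ w)) z ∧
      dzb (fun w => conj (ψ₂ w) * conj (φ₂ w)) z = -dz (fun w => conj (ψ₁ w) * conj (φ₁ w)) z ∧
      dzb (fun w => ψ₁ w * φ₁ w) z = -dz (fun w => ψ₂ w * φ₂ w) z ∧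
      dzb (fun w => conj (ψ₂ w) * φ₁ w) z = dz (fun w => conj (ψ₁ w) * φ₂ w) z := by
  intro z
  have d1 : DifferentiableAt ℝ ψ₁ z := (hψ₁.differentiable (by simp)) z
  have d2 : DifferentiableAt ℝ ψ₂ z := (hψ₂.differentiable (by simp)) z
  have e1 : DifferentiableAt ℝ φ₁ z := (hφ₁.differentiable (by simp)) z
  have e2 : DifferentiableAt ℝ φ₂ z := (hφ₂.differentiable (by simp)) z
  have dc1 : DifferentiableAt ℝ (fun w => conj (ψ₁ w)) z :=
    Complex.conjCLE.differentiableAt.comp z d1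
  have dc2 : DifferentiableAt ℝ (fun w => conj (ψ₂ w)) z :=
    Complex.conjCLE.differentiableAt.comp z d2
  have ec1 : DifferentiableAt ℝ (fun w => conj (φ₁ w)) z :=
    Complex.conjCLE.differentiableAt.comp z e1
  have ec2 : DifferentiableAt ℝ (fun w => conj (φ₂ w)) z :=
    Complex.conjCLE.differentiableAt.comp z e2
  obtain ⟨hA, hB⟩ := hDirac z
  obtain ⟨hC, hD⟩ := hDiracV z
  refine ⟨?_, ?_, ?_, ?_⟩
  · rw [dzb_mul _ _ z d1 ec2, dz_mul _ _ z d2 ec1,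
      dzb_conj _ z e2, dz_conj _ z e1, hB, hC, hD, hA]
    simp only [_root_.map_mul, map_neg, Complex.conj_conj]
    ring
  · rw [dzb_mul _ _ z dc2 ec2, dz_mul _ _ z dc1 ec1,
      dzb_conj _ z d2, dzb_conj _ z e2, dz_conj _ z d1, dz_conj _ z e1,
      hA, hC, hB, hD]
    simp only [_root_.map_mul, map_neg, Complex.conj_conj]
    ring
  · rw [dzb_mul _ _ z d1 e1, dz_mul _ _ z d2 e2, hB, hD, hA, hC]
    ring
  · rw [dzb_mul _ _ z dc2 e1, dz_mul _ _ z dc1 e2,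
      dzb_conj _ z d2, dz_conj _ z d1, hA, hD, hB, hC]
    simp only [_root_.map_mul, map_neg, Complex.conj_conj]
    ring
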